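/- Let (U, A, η, a) with twist constant K be a smooth areal solution on [R₀,R*). Then for every R ∈ [R₀,R*): (i) (1/R) ∫₀^{2π} |∂_R η(R,θ)| a(R,θ)⁻¹ dθ ≤ 𝓔_K(R₀); (ii) (1/R) ∫₀^{2π} |∂_θ η(R,θ)| dθ ≤ 𝓔(R₀); and (iii) for every θ, |η(R,θ)| ≤ R 𝓔(R₀) + |∫₀^{2π} η(R₀,θ') dθ'| + (sup_{θ'} a(R₀,θ')) · ((R² − R₀²)/2) · 𝓔_K(R₀). -/

import Mathlib

open Real

noncomputable section

/-- Partial derivative in the first (areal time `R`) variable. -/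
def pd1 (f : ℝ → ℝ → ℝ) (x y : ℝ) : ℝ := deriv (fun s => f s y) x

/-- Partial derivative in the second (space `θ`) variable. -/
def pd2 (f : ℝ → ℝ → ℝ) (x y : ℝ) : ℝ := deriv (fun s => f x s) y

/-- The energy density `E := a⁻¹ U_R² + a U_θ² + (e^{4U}/(4R²))(a⁻¹ A_R² + a A_θ²)`. -/
def Edens (U A a : ℝ → ℝ → ℝ) (r θ : ℝ) : ℝ :=
  (a r θ)⁻¹ * (pd1 U r θ) ^ 2 + a r θ * (pd2 U r θ) ^ 2
    + exp (4 * U r θ) / (4 * r ^ 2) *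
        ((a r θ)⁻¹ * (pd1 A r θ) ^ 2 + a r θ * (pd2 A r θ) ^ 2)

/-- The flux density `F := 2 U_R U_θ + (e^{4U}/(2R²)) A_R A_θ`. -/
def Fdens (U A : ℝ → ℝ → ℝ) (r θ : ℝ) : ℝ :=
  2 * pd1 U r θ * pd2 U r θ
    + exp (4 * U r θ) / (2 * r ^ 2) * (pd1 A r θ * pd2 A r θ)

/-- A smooth solution `(U, A, η, a)` of the `T²`-symmetric vacuum Einstein equations
in areal coordinates, with twist constant `K`, on the time set `D` (times `ℝ` in the
space variable `θ`, with all coefficients `2π`-periodic in `θ` and `a > 0`).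
The equations are (A1), (A2), (A3) and the constraints (A4) of the paper. -/
structure ArealSol (D : Set ℝ) (K : ℝ) where
  U : ℝ → ℝ → ℝ
  A : ℝ → ℝ → ℝ
  η : ℝ → ℝ → ℝ
  a : ℝ → ℝ → ℝ
  smooth_U : ContDiff ℝ (⊤ : ℕ∞) (Function.uncurry U)
  smooth_A : ContDiff ℝ (⊤ : ℕ∞) (Function.uncurry A)
  smooth_η : ContDiff ℝ (⊤ : ℕ∞) (Function.uncurry η)
  smooth_a : ContDiff ℝ (⊤ : ℕ∞) (Function.uncurry a)
  periodic_U : ∀ r θ : ℝ, U r (θ + 2 * π) = U r θ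
  periodic_A : ∀ r θ : ℝ, A r (θ + 2 * π) = A r θ
  periodic_η : ∀ r θ : ℝ, η r (θ + 2 * π) = η r θ
  periodic_a : ∀ r θ : ℝ, a r (θ + 2 * π) = a r θ
  apos : ∀ r ∈ D, ∀ θ : ℝ, 0 < a r θ
  eq_U : ∀ r ∈ D, ∀ θ : ℝ,
    pd1 (fun r' θ' => r' * (a r' θ')⁻¹ * pd1 U r' θ') r θ
      - pd2 (fun r' θ' => r' * a r' θ' * pd2 U r' θ') r θ
      = exp (4 * U r θ) / (2 * r) *
          ((a r θ)⁻¹ * (pd1 A r θ) ^ 2 - a r θ * (pd2 A r θ) ^ 2)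
  eq_A : ∀ r ∈ D, ∀ θ : ℝ,
    pd1 (fun r' θ' => r'⁻¹ * (a r' θ')⁻¹ * pd1 A r' θ') r θ
      - pd2 (fun r' θ' => r'⁻¹ * a r' θ' * pd2 A r' θ') r θ
      = (4 / r) * (a r θ * pd2 U r θ * pd2 A r θ - (a r θ)⁻¹ * pd1 U r θ * pd1 A r θ)
  eq_a : ∀ r ∈ D, ∀ θ : ℝ,
    pd1 (fun r' θ' => Real.log (a r' θ')) r θ
      = -(K ^ 2 * exp (2 * η r θ)) / (2 * r ^ 3)
  eq_ηR : ∀ r ∈ D, ∀ θ : ℝ,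
    pd1 η r θ + K ^ 2 / (4 * r ^ 3) * exp (2 * η r θ) = a r θ * r * Edens U A a r θ
  eq_ηθ : ∀ r ∈ D, ∀ θ : ℝ,
    pd2 η r θ = r * Fdens U A r θ

/-- The areal energy `𝓔(R)`. -/
def En (U A a : ℝ → ℝ → ℝ) (r : ℝ) : ℝ :=
  ∫ θ in (0:ℝ)..(2 * π), Edens U A a r θ

/-- The modified areal energy `𝓔_K(R)`. -/
def EnK (K : ℝ) (U A η a : ℝ → ℝ → ℝ) (r : ℝ) : ℝ :=
  ∫ θ in (0:ℝ)..(2 * π),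
    (Edens U A a r θ + K ^ 2 / (4 * r ^ 4) * exp (2 * η r θ) * (a r θ)⁻¹)

end

/-!
Once the wave equations (A1), (A2) eliminate `U_RR` and `A_RR`, and (A3) gives `a_R = -λ a` with
`λ = K² e^{2η} / (2R³) ≥ 0`, the energy densities obey `∂_R E ≤ ∂_θ (a F)` and
`∂_R (E + K² e^{2η} / (4R⁴ a)) ≤ ∂_θ (a F)`. The flux integrates to zero over a period, so `𝓔` and
`𝓔_K` are non-increasing. The constraints (A4) give `|η_R| ≤ a R (E + K² e^{2η} / (4R⁴ a))` and
`|η_θ| = R |F| ≤ R E`; integrating gives (i) and (ii). For (iii), `a` decreases in `R`, so the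
mean `∫ η(R, ·)` has derivative at most `(sup a(R₀, ·)) R 𝓔_K(R₀)` in absolute value, and `η(R, ·)`
differs from its mean by at most `∫ |η_θ|`.
-/

open Function MeasureTheory Set

section PartialDerivatives

variable {f g : ℝ → ℝ → ℝ} {x y : ℝ}

lemma DifferentiableAt.hasDerivAt_pd1 (hf : DifferentiableAt ℝ (uncurry f) (x, y)) :
    HasDerivAt (fun s => f s y) (pd1 f x y) x :=
  have h : DifferentiableAt ℝ (uncurry f ∘ fun s => (s, y)) x := hf.comp x (by fun_prop)
  h.hasDerivAt

lemma DifferentiableAt.hasDerivAt_pd2 (hf : DifferentiableAt ℝ (uncurry f) (x, y)) :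
    HasDerivAt (f x) (pd2 f x y) y :=
  have h : DifferentiableAt ℝ (uncurry f ∘ fun t => (x, t)) y := hf.comp y (by fun_prop)
  h.hasDerivAt

lemma DifferentiableAt.pd1_eq_fderiv (hf : DifferentiableAt ℝ (uncurry f) (x, y)) :
    pd1 f x y = fderiv ℝ (uncurry f) (x, y) (1, 0) := by
  have h := hf.hasFDerivAt.comp_hasDerivAt x ((hasDerivAt_id x).prodMk (hasDerivAt_const x y))
  exact h.deriv

lemma DifferentiableAt.pd2_eq_fderiv (hf : DifferentiableAt ℝ (uncurry f) (x, y)) :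
    pd2 f x y = fderiv ℝ (uncurry f) (x, y) (0, 1) := by
  have h := hf.hasFDerivAt.comp_hasDerivAt y ((hasDerivAt_const y x).prodMk (hasDerivAt_id y))
  exact h.deriv

lemma pd1_add (hf : DifferentiableAt ℝ (uncurry f) (x, y))
    (hg : DifferentiableAt ℝ (uncurry g) (x, y)) :
    pd1 (fun s t => f s t + g s t) x y = pd1 f x y + pd1 g x y :=
  (hf.hasDerivAt_pd1.add hg.hasDerivAt_pd1).deriv

lemma pd1_log (hf : DifferentiableAt ℝ (uncurry f) (x, y)) (hfxy : f x y ≠ 0) :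
    pd1 (fun s t => Real.log (f s t)) x y = pd1 f x y / f x y :=
  (hf.hasDerivAt_pd1.log hfxy).deriv

lemma ContDiffOn.continuousOn_pd1 {s : Set (ℝ × ℝ)} (hf : ContDiffOn ℝ 1 (uncurry f) s)
    (hs : IsOpen s) : ContinuousOn (uncurry (pd1 f)) s :=
  ((hf.continuousOn_fderiv_of_isOpen hs le_rfl).clm_apply
    (continuousOn_const (c := ((1 : ℝ), (0 : ℝ))))).congr fun _ hp =>
    ((hf.differentiableOn one_ne_zero).differentiableAt (hs.mem_nhds hp)).pd1_eq_fderiv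

lemma ContDiff.of_uncurry {n : WithTop ℕ∞} (hf : ContDiff ℝ n (uncurry f)) (x : ℝ) :
    ContDiff ℝ n (f x) :=
  hf.comp (contDiff_const.prodMk contDiff_id)

lemma hasDerivAt_pd1 (hf : ContDiff ℝ (⊤ : ℕ∞) (uncurry f)) (x y : ℝ) :
    HasDerivAt (fun s => f s y) (pd1 f x y) x :=
  (hf.differentiable (by simp) _).hasDerivAt_pd1

lemma hasDerivAt_pd2 (hf : ContDiff ℝ (⊤ : ℕ∞) (uncurry f)) (x y : ℝ) :
    HasDerivAt (f x) (pd2 f x y) y :=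
  (hf.differentiable (by simp) _).hasDerivAt_pd2

lemma contDiff_pd1 (hf : ContDiff ℝ (⊤ : ℕ∞) (uncurry f)) :
    ContDiff ℝ (⊤ : ℕ∞) (uncurry (pd1 f)) := by
  have h : uncurry (pd1 f) = fun p => fderiv ℝ (uncurry f) p (1, 0) :=
    funext fun p => (hf.differentiable (by simp) p).pd1_eq_fderiv
  rw [h]
  exact (hf.fderiv_right (by simp)).clm_apply contDiff_const

lemma contDiff_pd2 (hf : ContDiff ℝ (⊤ : ℕ∞) (uncurry f)) :
    ContDiff ℝ (⊤ : ℕ∞) (uncurry (pd2 f)) := by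
  have h : uncurry (pd2 f) = fun p => fderiv ℝ (uncurry f) p (0, 1) :=
    funext fun p => (hf.differentiable (by simp) p).pd2_eq_fderiv
  rw [h]
  exact (hf.fderiv_right (by simp)).clm_apply contDiff_const

lemma pd1_pd2_eq_fderiv_fderiv (hf : ContDiff ℝ 2 (uncurry f)) (x y : ℝ) :
    pd1 (pd2 f) x y = fderiv ℝ (fderiv ℝ (uncurry f)) (x, y) (1, 0) (0, 1) := by
  have hd2 : Differentiable ℝ (fderiv ℝ (uncurry f)) :=
    (hf.fderiv_right (m := 1) (by norm_num)).differentiable one_ne_zero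
  have h : HasDerivAt (fun s => fderiv ℝ (uncurry f) (s, y))
      (fderiv ℝ (fderiv ℝ (uncurry f)) (x, y) (1, 0)) x :=
    (hd2 (x, y)).hasFDerivAt.comp_hasDerivAt x ((hasDerivAt_id x).prodMk (hasDerivAt_const x y))
  have h' := h.clm_apply (hasDerivAt_const x ((0 : ℝ), (1 : ℝ)))
  rw [map_zero, add_zero] at h'
  rw [← h'.deriv]
  exact congrArg (deriv · x) (funext fun s => (hf.differentiable two_ne_zero (s, y)).pd2_eq_fderiv)

lemma pd2_pd1_eq_fderiv_fderiv (hf : ContDiff ℝ 2 (uncurry f)) (x y : ℝ) :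
    pd2 (pd1 f) x y = fderiv ℝ (fderiv ℝ (uncurry f)) (x, y) (0, 1) (1, 0) := by
  have hd2 : Differentiable ℝ (fderiv ℝ (uncurry f)) :=
    (hf.fderiv_right (m := 1) (by norm_num)).differentiable one_ne_zero
  have h : HasDerivAt (fun t => fderiv ℝ (uncurry f) (x, t))
      (fderiv ℝ (fderiv ℝ (uncurry f)) (x, y) (0, 1)) y :=
    (hd2 (x, y)).hasFDerivAt.comp_hasDerivAt y ((hasDerivAt_const y x).prodMk (hasDerivAt_id y))
  have h' := h.clm_apply (hasDerivAt_const y ((1 : ℝ), (0 : ℝ)))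
  rw [map_zero, add_zero] at h'
  rw [← h'.deriv]
  exact congrArg (deriv · y) (funext fun t => (hf.differentiable two_ne_zero (x, t)).pd1_eq_fderiv)

lemma pd1_pd2_comm (hf : ContDiff ℝ 2 (uncurry f)) (x y : ℝ) :
    pd1 (pd2 f) x y = pd2 (pd1 f) x y := by
  rw [pd1_pd2_eq_fderiv_fderiv hf, pd2_pd1_eq_fderiv_fderiv hf,
    (hf.contDiffAt.isSymmSndFDerivAt (by simp)).eq]

lemma pd1_periodic {T : ℝ} (hf : ∀ x y, f x (y + T) = f x y) (x y : ℝ) :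
    pd1 f x (y + T) = pd1 f x y := by
  simp only [pd1, hf]

lemma pd2_periodic {T : ℝ} (hf : ∀ x y, f x (y + T) = f x y) (x y : ℝ) :
    pd2 f x (y + T) = pd2 f x y := by
  rw [pd2, pd2, ← deriv_comp_add_const]
  simp only [hf]

end PartialDerivatives

section ParametricIntegrals

variable {F G : ℝ → ℝ → ℝ} {Ω : Set ℝ}

lemma isOpen_setOf_forall_pos_of_periodic {T : ℝ} (hF : Continuous (uncurry F)) (hT : 0 < T)
    (hper : ∀ x y, F x (y + T) = F x y) : IsOpen {x | ∀ y, 0 < F x y} := by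
  have h : {x | ∀ y, 0 < F x y} = {x | ∀ y ∈ Icc 0 T, 0 < F x y} := by
    ext x
    refine ⟨fun hx y _ => hx y, fun hx y => ?_⟩
    obtain ⟨z, hz, hzy⟩ := (show Periodic (F x) T from hper x).exists_mem_Ico₀ hT y
    exact hzy ▸ hx z (Ico_subset_Icc_self hz)
  rw [h, isOpen_iff_eventually]
  exact fun x hx => isCompact_Icc.eventually_forall_of_forall_eventually fun y hy =>
    (isOpen_lt continuous_const hF).mem_nhds (hx y hy)

lemma ContinuousOn.continuous_apply_of_uncurry (hF : ContinuousOn (uncurry F) (Ω ×ˢ univ))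
    {x : ℝ} (hx : x ∈ Ω) : Continuous (F x) :=
  hF.comp_continuous (continuous_const.prodMk continuous_id) fun _ => ⟨hx, trivial⟩

lemma hasDerivAt_intervalIntegral_of_contDiffOn (hΩ : IsOpen Ω)
    (hF : ContDiffOn ℝ 1 (uncurry F) (Ω ×ˢ univ)) {x : ℝ} (hx : x ∈ Ω) (a b : ℝ) :
    HasDerivAt (fun y => ∫ θ in a..b, F y θ) (∫ θ in a..b, pd1 F x θ) x := by
  have hopen : IsOpen (Ω ×ˢ (univ : Set ℝ)) := hΩ.prod isOpen_univ
  have hF' := hF.continuousOn_pd1 hopen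
  obtain ⟨ε, hε, hball⟩ := Metric.isOpen_iff.1 hΩ x hx
  have hsub : Metric.closedBall x (ε / 2) ⊆ Ω :=
    (Metric.closedBall_subset_ball (half_lt_self hε)).trans hball
  obtain ⟨C, hC⟩ :=
    ((isCompact_closedBall x (ε / 2)).prod isCompact_uIcc).exists_bound_of_continuousOn
    (hF'.mono (prod_mono hsub (subset_univ (uIcc a b))))
  refine (intervalIntegral.hasDerivAt_integral_of_dominated_loc_of_deriv_le (bound := fun _ => C)
    (Metric.ball_mem_nhds x (half_pos hε))
    (Filter.eventually_of_mem (hΩ.mem_nhds hx) fun y hy =>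
      (hF.continuousOn.continuous_apply_of_uncurry hy).aestronglyMeasurable)
    ((hF.continuousOn.continuous_apply_of_uncurry hx).intervalIntegrable a b)
    (hF'.continuous_apply_of_uncurry hx).aestronglyMeasurable
    (ae_of_all _ fun θ hθ y hy =>
      hC (y, θ) ⟨Metric.ball_subset_closedBall hy, uIoc_subset_uIcc hθ⟩)
    intervalIntegrable_const (ae_of_all _ fun θ _ y hy => ?_)).2
  have hy : (y, θ) ∈ Ω ×ˢ univ := ⟨hsub (Metric.ball_subset_closedBall hy), trivial⟩
  exact ((hF.differentiableOn one_ne_zero).differentiableAt (hopen.mem_nhds hy)).hasDerivAt_pd1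

lemma Function.Periodic.integral_deriv_eq_zero {φ : ℝ → ℝ} {T : ℝ} (hper : Periodic φ T)
    (hφ : ContDiff ℝ 1 φ) : ∫ u in (0 : ℝ)..T, deriv φ u = 0 := by
  rw [intervalIntegral.integral_deriv_of_contDiffOn_uIcc hφ.contDiffOn, ← zero_add T, hper 0,
    sub_self]

lemma intervalIntegral_le_of_pd1_le_pd2 {T x₀ x₁ : ℝ} (hΩ : IsOpen Ω)
    (hF : ContDiffOn ℝ 1 (uncurry F) (Ω ×ˢ univ)) (hG : ∀ x, ContDiff ℝ 1 (G x))
    (hGper : ∀ x, Periodic (G x) T) (hT : 0 ≤ T) (hsub : Icc x₀ x₁ ⊆ Ω) (h01 : x₀ ≤ x₁)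
    (hle : ∀ x ∈ Ioo x₀ x₁, ∀ θ, pd1 F x θ ≤ pd2 G x θ) :
    ∫ θ in (0 : ℝ)..T, F x₁ θ ≤ ∫ θ in (0 : ℝ)..T, F x₀ θ := by
  have hderiv (x : ℝ) (hx : x ∈ Icc x₀ x₁) :=
    hasDerivAt_intervalIntegral_of_contDiffOn hΩ hF (hsub hx) 0 T
  refine antitoneOn_of_hasDerivWithinAt_nonpos (convex_Icc x₀ x₁)
    (fun x hx => (hderiv x hx).continuousAt.continuousWithinAt)
    (fun x hx => (hderiv x (interior_subset hx)).hasDerivWithinAt) (fun x hx => ?_)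
    (left_mem_Icc.2 h01) (right_mem_Icc.2 h01) h01
  rw [interior_Icc] at hx
  have hcont := (hF.continuousOn_pd1 (hΩ.prod isOpen_univ)).continuous_apply_of_uncurry
    (hsub (Ioo_subset_Icc_self hx))
  calc ∫ θ in (0 : ℝ)..T, pd1 F x θ ≤ ∫ θ in (0 : ℝ)..T, pd2 G x θ :=
        intervalIntegral.integral_mono_on hT (hcont.intervalIntegrable 0 T)
          (((hG x).continuous_deriv le_rfl).intervalIntegrable 0 T) fun θ _ => hle x hx θ
    _ = 0 := (hGper x).integral_deriv_eq_zero (hG x)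

end ParametricIntegrals

section Oscillation

variable {φ : ℝ → ℝ} {T : ℝ}

lemma abs_sub_le_integral_abs_deriv (hφ : ContDiff ℝ 1 φ) {a b s t : ℝ} (hs : s ∈ Icc a b)
    (ht : t ∈ Icc a b) : |φ s - φ t| ≤ ∫ u in a..b, |deriv φ u| := by
  wlog hts : t ≤ s generalizing s t
  · rw [abs_sub_comm]; exact this ht hs (le_of_not_ge hts)
  rw [← intervalIntegral.integral_deriv_of_contDiffOn_uIcc hφ.contDiffOn]
  calc |∫ u in t..s, deriv φ u| ≤ ∫ u in t..s, |deriv φ u| :=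
        intervalIntegral.abs_integral_le_integral_abs hts
    _ ≤ ∫ u in a..b, |deriv φ u| :=
        intervalIntegral.integral_mono_interval ht.1 hts hs.2 (ae_of_all _ fun u => abs_nonneg _)
          (((hφ.continuous_deriv le_rfl).abs).intervalIntegrable a b)

lemma Function.Periodic.abs_le_integral_abs_deriv_add (hper : Periodic φ T) (hT : 0 < T)
    (hφ : ContDiff ℝ 1 φ) (θ : ℝ) :
    |φ θ| ≤ (∫ u in (0 : ℝ)..T, |deriv φ u|) + |∫ u in (0 : ℝ)..T, φ u| / T := by
  obtain ⟨θ₀, hθ₀, hθ₀θ⟩ := hper.exists_mem_Ico₀ hT θ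
  obtain ⟨c, hc, hcavg⟩ := exists_eq_interval_average hT.ne hφ.continuous.continuousOn
  rw [interval_average_eq_div, sub_zero] at hcavg
  rw [uIoo_of_le hT.le] at hc
  calc |φ θ| = |(φ θ₀ - φ c) + φ c| := by rw [sub_add_cancel, hθ₀θ]
    _ ≤ |φ θ₀ - φ c| + |φ c| := abs_add_le _ _
    _ ≤ (∫ u in (0 : ℝ)..T, |deriv φ u|) + |∫ u in (0 : ℝ)..T, φ u| / T :=
        add_le_add
          (abs_sub_le_integral_abs_deriv hφ (Ico_subset_Icc_self hθ₀) (Ioo_subset_Icc_self hc))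
          (by rw [hcavg, abs_div, abs_of_pos hT])

end Oscillation

noncomputable def energyFlux (U A a : ℝ → ℝ → ℝ) (r θ : ℝ) : ℝ := a r θ * Fdens U A r θ

noncomputable def twistDens (K : ℝ) (η a : ℝ → ℝ → ℝ) (r θ : ℝ) : ℝ :=
  K ^ 2 / (4 * r ^ 4) * exp (2 * η r θ) * (a r θ)⁻¹

section Densities

variable {U A η a : ℝ → ℝ → ℝ} {K r θ : ℝ}

lemma Edens_nonneg (hb : 0 < a r θ) : 0 ≤ Edens U A a r θ := by
  unfold Edens; positivity

lemma twistDens_nonneg (hb : 0 < a r θ) : 0 ≤ twistDens K η a r θ := by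
  unfold twistDens; positivity

lemma abs_Fdens_le_Edens (hb : 0 < a r θ) : |Fdens U A r θ| ≤ Edens U A a r θ := by
  have amgm (x y : ℝ) : |2 * x * y| ≤ (a r θ)⁻¹ * x ^ 2 + a r θ * y ^ 2 := by
    have h : 0 ≤ (a r θ)⁻¹ * (x - a r θ * y) ^ 2 := by positivity
    have h' : 0 ≤ (a r θ)⁻¹ * (x + a r θ * y) ^ 2 := by positivity
    rw [abs_le]
    constructor <;> field_simp at h h' ⊢ <;> nlinarith
  have he : 0 ≤ exp (4 * U r θ) / (4 * r ^ 2) := by positivity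
  calc |Fdens U A r θ|
      = |2 * pd1 U r θ * pd2 U r θ
          + exp (4 * U r θ) / (4 * r ^ 2) * (2 * pd1 A r θ * pd2 A r θ)| := by
        rw [Fdens]; congr 1; ring
    _ ≤ |2 * pd1 U r θ * pd2 U r θ|
          + |exp (4 * U r θ) / (4 * r ^ 2) * (2 * pd1 A r θ * pd2 A r θ)| := abs_add_le _ _
    _ ≤ Edens U A a r θ := by
        rw [abs_mul (exp _ / _), abs_of_nonneg he, Edens]
        gcongr <;> exact amgm _ _

lemma isOpen_setOf_ne_zero_and_ne_zero (ha : Continuous (uncurry a)) :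
    IsOpen {p : ℝ × ℝ | p.1 ≠ 0 ∧ a p.1 p.2 ≠ 0} :=
  (isOpen_ne_fun continuous_fst continuous_const).inter (isOpen_ne_fun ha continuous_const)

lemma contDiffOn_Edens (hU : ContDiff ℝ (⊤ : ℕ∞) (uncurry U))
    (hA : ContDiff ℝ (⊤ : ℕ∞) (uncurry A)) (ha : ContDiff ℝ (⊤ : ℕ∞) (uncurry a)) :
    ContDiffOn ℝ (⊤ : ℕ∞) (uncurry (Edens U A a)) {p | p.1 ≠ 0 ∧ a p.1 p.2 ≠ 0} := by
  have := contDiff_pd1 hU; have := contDiff_pd2 hU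
  have := contDiff_pd1 hA; have := contDiff_pd2 hA
  unfold Edens
  fun_prop (disch := first | exact fun p hp => hp.2 | exact fun p hp => by have := hp.1; positivity)

lemma contDiffOn_twistDens (hη : ContDiff ℝ (⊤ : ℕ∞) (uncurry η))
    (ha : ContDiff ℝ (⊤ : ℕ∞) (uncurry a)) :
    ContDiffOn ℝ (⊤ : ℕ∞) (uncurry (twistDens K η a)) {p | p.1 ≠ 0 ∧ a p.1 p.2 ≠ 0} := by
  unfold twistDens
  fun_prop (disch := first | exact fun p hp => hp.2 | exact fun p hp => by have := hp.1; positivity)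

lemma contDiff_energyFlux (hU : ContDiff ℝ (⊤ : ℕ∞) (uncurry U))
    (hA : ContDiff ℝ (⊤ : ℕ∞) (uncurry A)) (ha : ContDiff ℝ (⊤ : ℕ∞) (uncurry a)) (r : ℝ) :
    ContDiff ℝ (⊤ : ℕ∞) (energyFlux U A a r) := by
  have := contDiff_pd1 hU; have := contDiff_pd2 hU
  have := contDiff_pd1 hA; have := contDiff_pd2 hA
  unfold energyFlux Fdens
  fun_prop

lemma energyFlux_periodic {T : ℝ} (hU : ∀ r θ, U r (θ + T) = U r θ)
    (hA : ∀ r θ, A r (θ + T) = A r θ) (ha : ∀ r θ, a r (θ + T) = a r θ) (r : ℝ) :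
    Periodic (energyFlux U A a r) T := fun θ => by
  simp only [energyFlux, Fdens, pd1_periodic hU, pd2_periodic hU, pd1_periodic hA,
    pd2_periodic hA, hU, ha]

lemma wave_lhs_U_eq (hU : ContDiff ℝ (⊤ : ℕ∞) (uncurry U)) (ha : ContDiff ℝ (⊤ : ℕ∞) (uncurry a))
    (hb : a r θ ≠ 0) :
    pd1 (fun r' θ' => r' * (a r' θ')⁻¹ * pd1 U r' θ') r θ
      - pd2 (fun r' θ' => r' * a r' θ' * pd2 U r' θ') r θ
      = (a r θ)⁻¹ * pd1 U r θ - r * pd1 a r θ / a r θ ^ 2 * pd1 U r θ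
        + r * (a r θ)⁻¹ * pd1 (pd1 U) r θ
        - r * (pd2 a r θ * pd2 U r θ + a r θ * pd2 (pd2 U) r θ) := by
  have h₁ : pd1 (fun r' θ' => r' * (a r' θ')⁻¹ * pd1 U r' θ') r θ = _ :=
    (((hasDerivAt_id' r).mul ((hasDerivAt_pd1 ha r θ).inv hb)).mul
      (hasDerivAt_pd1 (contDiff_pd1 hU) r θ)).deriv
  have h₂ : pd2 (fun r' θ' => r' * a r' θ' * pd2 U r' θ') r θ = _ :=
    (((hasDerivAt_const θ r).mul (hasDerivAt_pd2 ha r θ)).mul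
      (hasDerivAt_pd2 (contDiff_pd2 hU) r θ)).deriv
  rw [h₁, h₂]
  simp only [Pi.mul_apply, Pi.inv_apply]
  ring

lemma wave_lhs_A_eq (hA : ContDiff ℝ (⊤ : ℕ∞) (uncurry A)) (ha : ContDiff ℝ (⊤ : ℕ∞) (uncurry a))
    (hr : r ≠ 0) (hb : a r θ ≠ 0) :
    pd1 (fun r' θ' => r'⁻¹ * (a r' θ')⁻¹ * pd1 A r' θ') r θ
      - pd2 (fun r' θ' => r'⁻¹ * a r' θ' * pd2 A r' θ') r θ
      = -(r ^ 2)⁻¹ * (a r θ)⁻¹ * pd1 A r θ - r⁻¹ * pd1 a r θ / a r θ ^ 2 * pd1 A r θ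
        + r⁻¹ * (a r θ)⁻¹ * pd1 (pd1 A) r θ
        - r⁻¹ * (pd2 a r θ * pd2 A r θ + a r θ * pd2 (pd2 A) r θ) := by
  have h₁ : pd1 (fun r' θ' => r'⁻¹ * (a r' θ')⁻¹ * pd1 A r' θ') r θ = _ :=
    (((hasDerivAt_inv hr).mul ((hasDerivAt_pd1 ha r θ).inv hb)).mul
      (hasDerivAt_pd1 (contDiff_pd1 hA) r θ)).deriv
  have h₂ : pd2 (fun r' θ' => r'⁻¹ * a r' θ' * pd2 A r' θ') r θ = _ :=
    (((hasDerivAt_const θ r⁻¹).mul (hasDerivAt_pd2 ha r θ)).mul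
      (hasDerivAt_pd2 (contDiff_pd2 hA) r θ)).deriv
  rw [h₁, h₂]
  simp only [Pi.mul_apply, Pi.inv_apply]
  ring

lemma pd1_Edens_eq (hU : ContDiff ℝ (⊤ : ℕ∞) (uncurry U))
    (hA : ContDiff ℝ (⊤ : ℕ∞) (uncurry A)) (ha : ContDiff ℝ (⊤ : ℕ∞) (uncurry a)) (hr : r ≠ 0)
    (hb : a r θ ≠ 0)
    (heU : pd1 (fun r' θ' => r' * (a r' θ')⁻¹ * pd1 U r' θ') r θ
      - pd2 (fun r' θ' => r' * a r' θ' * pd2 U r' θ') r θ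
      = exp (4 * U r θ) / (2 * r) * ((a r θ)⁻¹ * (pd1 A r θ) ^ 2 - a r θ * (pd2 A r θ) ^ 2))
    (heA : pd1 (fun r' θ' => r'⁻¹ * (a r' θ')⁻¹ * pd1 A r' θ') r θ
      - pd2 (fun r' θ' => r'⁻¹ * a r' θ' * pd2 A r' θ') r θ
      = (4 / r) * (a r θ * pd2 U r θ * pd2 A r θ - (a r θ)⁻¹ * pd1 U r θ * pd1 A r θ))
    (hea : pd1 a r θ = -(K ^ 2 * exp (2 * η r θ)) / (2 * r ^ 3) * a r θ) :
    pd1 (Edens U A a) r θ = pd2 (energyFlux U A a) r θ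
      - K ^ 2 * exp (2 * η r θ) / (2 * r ^ 3) * Edens U A a r θ
      - 2 / r * ((a r θ)⁻¹ * pd1 U r θ ^ 2
        + exp (4 * U r θ) / (4 * r ^ 2) * a r θ * pd2 A r θ ^ 2) := by
  have ha1 := hasDerivAt_pd1 ha r θ
  have hai := ha1.inv hb
  have hU1 := hasDerivAt_pd1 (contDiff_pd1 hU) r θ
  have hU2 := hasDerivAt_pd1 (contDiff_pd2 hU) r θ
  have hA1 := hasDerivAt_pd1 (contDiff_pd1 hA) r θ
  have hA2 := hasDerivAt_pd1 (contDiff_pd2 hA) r θ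
  have hsq : HasDerivAt (fun s : ℝ => 4 * s ^ 2) (4 * (2 * r)) r := by
    simpa using (hasDerivAt_pow 2 r).const_mul (4 : ℝ)
  have hE : pd1 (Edens U A a) r θ = _ :=
    (((hai.mul (hU1.pow 2)).add (ha1.mul (hU2.pow 2))).add
      ((((hasDerivAt_pd1 hU r θ).const_mul 4).exp.div hsq (by positivity)).mul
        ((hai.mul (hA1.pow 2)).add (ha1.mul (hA2.pow 2))))).deriv
  have hF : pd2 (energyFlux U A a) r θ = _ :=
    ((hasDerivAt_pd2 ha r θ).mul
      ((((hasDerivAt_pd2 (contDiff_pd1 hU) r θ).const_mul 2).mul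
        (hasDerivAt_pd2 (contDiff_pd2 hU) r θ)).add
      ((((hasDerivAt_pd2 hU r θ).const_mul 4).exp.div_const (2 * r ^ 2)).mul
        ((hasDerivAt_pd2 (contDiff_pd1 hA) r θ).mul (hasDerivAt_pd2 (contDiff_pd2 hA) r θ))))).deriv
  simp only [Pi.mul_apply, Pi.inv_apply, Pi.pow_apply, Pi.div_apply, Pi.add_apply,
    Nat.cast_ofNat] at hE hF
  rw [wave_lhs_U_eq hU ha hb] at heU
  rw [wave_lhs_A_eq hA ha hr hb] at heA
  rw [hE, hF, pd1_pd2_comm (hU.of_le (by norm_cast)), pd1_pd2_comm (hA.of_le (by norm_cast))]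
  rw [hea] at heU heA ⊢
  simp only [Edens]
  -- these multiples of (A1) and (A2) cancel the terms in `U_RR` and `A_RR`
  linear_combination (norm := skip) (2 * pd1 U r θ / r) * heU
    + (exp (4 * U r θ) * pd1 A r θ / (2 * r)) * heA
  field_simp
  ring

lemma pd1_twistDens_eq (hη : ContDiff ℝ (⊤ : ℕ∞) (uncurry η))
    (ha : ContDiff ℝ (⊤ : ℕ∞) (uncurry a)) (hr : r ≠ 0) (hb : a r θ ≠ 0)
    (heη : pd1 η r θ + K ^ 2 / (4 * r ^ 3) * exp (2 * η r θ) = a r θ * r * Edens U A a r θ)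
    (hea : pd1 a r θ = -(K ^ 2 * exp (2 * η r θ)) / (2 * r ^ 3) * a r θ) :
    pd1 (twistDens K η a) r θ
      = K ^ 2 * exp (2 * η r θ) / (2 * r ^ 3) * Edens U A a r θ - 4 / r * twistDens K η a r θ := by
  have hq : HasDerivAt (fun s : ℝ => 4 * s ^ 4) (4 * (4 * r ^ 3)) r := by
    simpa using (hasDerivAt_pow 4 r).const_mul (4 : ℝ)
  have hM : pd1 (twistDens K η a) r θ = _ := ((((hasDerivAt_const r (K ^ 2)).div hq
    (by positivity)).mul ((hasDerivAt_pd1 hη r θ).const_mul 2).exp).mul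
    ((hasDerivAt_pd1 ha r θ).inv hb)).deriv
  simp only [Pi.mul_apply, Pi.inv_apply, Pi.div_apply] at hM
  rw [hM, hea, eq_sub_of_add_eq heη, twistDens]
  field_simp
  ring

end Densities

namespace ArealSol

section

variable {D : Set ℝ} {K r : ℝ} (S : ArealSol D K)

lemma pd1_a_eq (hr : r ∈ D) (θ : ℝ) :
    pd1 S.a r θ = -(K ^ 2 * exp (2 * S.η r θ)) / (2 * r ^ 3) * S.a r θ := by
  have h := S.eq_a r hr θ
  rwa [pd1_log (S.smooth_a.differentiable (by simp) _) (S.apos r hr θ).ne',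
    div_eq_iff (S.apos r hr θ).ne'] at h

lemma differentiableAt_Edens (hr : r ∈ D) (hr0 : r ≠ 0) (θ : ℝ) :
    DifferentiableAt ℝ (uncurry (Edens S.U S.A S.a)) (r, θ) :=
  ((contDiffOn_Edens S.smooth_U S.smooth_A S.smooth_a).contDiffAt
    ((isOpen_setOf_ne_zero_and_ne_zero S.smooth_a.continuous).mem_nhds
      ⟨hr0, (S.apos r hr θ).ne'⟩)).differentiableAt (by simp)

lemma differentiableAt_twistDens (hr : r ∈ D) (hr0 : r ≠ 0) (θ : ℝ) :
    DifferentiableAt ℝ (uncurry (twistDens K S.η S.a)) (r, θ) :=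
  ((contDiffOn_twistDens S.smooth_η S.smooth_a).contDiffAt
    ((isOpen_setOf_ne_zero_and_ne_zero S.smooth_a.continuous).mem_nhds
      ⟨hr0, (S.apos r hr θ).ne'⟩)).differentiableAt (by simp)

lemma continuous_Edens (hr : r ∈ D) (hr0 : r ≠ 0) : Continuous (Edens S.U S.A S.a r) :=
  ((contDiffOn_Edens S.smooth_U S.smooth_A S.smooth_a).continuousOn.mono
    fun p (hp : p ∈ ({r} : Set ℝ) ×ˢ univ) => ⟨hp.1 ▸ hr0, hp.1 ▸ (S.apos r hr p.2).ne'⟩)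
    |>.continuous_apply_of_uncurry rfl

lemma continuous_EnKdens (hr : r ∈ D) (hr0 : r ≠ 0) :
    Continuous fun θ => Edens S.U S.A S.a r θ + twistDens K S.η S.a r θ :=
  ContinuousOn.continuous_apply_of_uncurry
    (F := fun s t => Edens S.U S.A S.a s t + twistDens K S.η S.a s t) (Ω := {r})
    (((contDiffOn_Edens S.smooth_U S.smooth_A S.smooth_a).add
      (contDiffOn_twistDens S.smooth_η S.smooth_a)).continuousOn.mono
      fun p hp => ⟨hp.1 ▸ hr0, hp.1 ▸ (S.apos r hr p.2).ne'⟩) rfl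

lemma pd1_Edens_le (hr : r ∈ D) (hr0 : 0 < r) (θ : ℝ) :
    pd1 (Edens S.U S.A S.a) r θ ≤ pd2 (energyFlux S.U S.A S.a) r θ := by
  have hb := S.apos r hr θ
  have := Edens_nonneg (U := S.U) (A := S.A) hb
  rw [pd1_Edens_eq S.smooth_U S.smooth_A S.smooth_a hr0.ne' hb.ne' (S.eq_U r hr θ)
    (S.eq_A r hr θ) (S.pd1_a_eq hr θ)]
  have : 0 ≤ K ^ 2 * exp (2 * S.η r θ) / (2 * r ^ 3) * Edens S.U S.A S.a r θ := by positivity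
  have : 0 ≤ 2 / r * ((S.a r θ)⁻¹ * pd1 S.U r θ ^ 2
      + exp (4 * S.U r θ) / (4 * r ^ 2) * S.a r θ * pd2 S.A r θ ^ 2) := by positivity
  linarith

lemma pd1_EnKdens_le (hr : r ∈ D) (hr0 : 0 < r) (θ : ℝ) :
    pd1 (fun s t => Edens S.U S.A S.a s t + twistDens K S.η S.a s t) r θ
      ≤ pd2 (energyFlux S.U S.A S.a) r θ := by
  have hb := S.apos r hr θ
  have := twistDens_nonneg (K := K) (η := S.η) hb
  rw [pd1_add (S.differentiableAt_Edens hr hr0.ne' θ) (S.differentiableAt_twistDens hr hr0.ne' θ),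
    pd1_Edens_eq S.smooth_U S.smooth_A S.smooth_a hr0.ne' hb.ne' (S.eq_U r hr θ)
      (S.eq_A r hr θ) (S.pd1_a_eq hr θ),
    pd1_twistDens_eq S.smooth_η S.smooth_a hr0.ne' hb.ne' (S.eq_ηR r hr θ) (S.pd1_a_eq hr θ)]
  have : 0 ≤ 2 / r * ((S.a r θ)⁻¹ * pd1 S.U r θ ^ 2
      + exp (4 * S.U r θ) / (4 * r ^ 2) * S.a r θ * pd2 S.A r θ ^ 2) := by positivity
  have : 0 ≤ 4 / r * twistDens K S.η S.a r θ := by positivity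
  linarith

lemma pd1_η_eq (hr : r ∈ D) (hr0 : r ≠ 0) (θ : ℝ) :
    pd1 S.η r θ = r * (Edens S.U S.A S.a r θ - twistDens K S.η S.a r θ) * S.a r θ := by
  rw [eq_sub_of_add_eq (S.eq_ηR r hr θ), twistDens]
  field_simp [(S.apos r hr θ).ne']

lemma abs_pd1_η_le (hr : r ∈ D) (hr0 : 0 < r) (θ : ℝ) :
    |pd1 S.η r θ| ≤ r * (Edens S.U S.A S.a r θ + twistDens K S.η S.a r θ) * S.a r θ := by
  have hb := S.apos r hr θ
  have hE := Edens_nonneg (U := S.U) (A := S.A) hb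
  have hM := twistDens_nonneg (K := K) (η := S.η) hb
  rw [S.pd1_η_eq hr hr0.ne', abs_mul, abs_mul, abs_of_pos hr0, abs_of_pos hb]
  gcongr
  exact abs_sub_le_iff.2 ⟨by linarith, by linarith⟩

lemma abs_pd2_η_le (hr : r ∈ D) (hr0 : 0 < r) (θ : ℝ) :
    |pd2 S.η r θ| ≤ r * Edens S.U S.A S.a r θ := by
  rw [S.eq_ηθ r hr θ, abs_mul, abs_of_pos hr0]
  exact mul_le_mul_of_nonneg_left (abs_Fdens_le_Edens (S.apos r hr θ)) hr0.le

end

section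

variable {R₀ Rs K r : ℝ} (S : ArealSol (Ico R₀ Rs) K)

lemma isOpen_setOf_pos_forall_a_pos : IsOpen {s | 0 < s ∧ ∀ θ, 0 < S.a s θ} :=
  isOpen_Ioi.inter (isOpen_setOf_forall_pos_of_periodic S.smooth_a.continuous two_pi_pos
    S.periodic_a)

lemma Icc_subset_setOf_pos_forall_a_pos (hR₀ : 0 < R₀) (hr : r ∈ Ico R₀ Rs) :
    Icc R₀ r ⊆ {s | 0 < s ∧ ∀ θ, 0 < S.a s θ} := fun s hs =>
  ⟨hR₀.trans_le hs.1, S.apos s ⟨hs.1, hs.2.trans_lt hr.2⟩⟩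

lemma En_le (hR₀ : 0 < R₀) (hr : r ∈ Ico R₀ Rs) : En S.U S.A S.a r ≤ En S.U S.A S.a R₀ :=
  intervalIntegral_le_of_pd1_le_pd2 S.isOpen_setOf_pos_forall_a_pos
    ((contDiffOn_Edens S.smooth_U S.smooth_A S.smooth_a).of_le (by norm_cast) |>.mono
      fun p hp => ⟨hp.1.1.ne', (hp.1.2 p.2).ne'⟩)
    (fun x => (contDiff_energyFlux S.smooth_U S.smooth_A S.smooth_a x).of_le (by norm_cast))
    (energyFlux_periodic S.periodic_U S.periodic_A S.periodic_a) two_pi_pos.le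
    (S.Icc_subset_setOf_pos_forall_a_pos hR₀ hr) hr.1
    fun x hx => S.pd1_Edens_le ⟨hx.1.le, hx.2.trans hr.2⟩ (hR₀.trans hx.1)

lemma EnK_le (hR₀ : 0 < R₀) (hr : r ∈ Ico R₀ Rs) :
    EnK K S.U S.A S.η S.a r ≤ EnK K S.U S.A S.η S.a R₀ :=
  intervalIntegral_le_of_pd1_le_pd2
    (F := fun s t => Edens S.U S.A S.a s t + twistDens K S.η S.a s t)
    S.isOpen_setOf_pos_forall_a_pos
    (((contDiffOn_Edens S.smooth_U S.smooth_A S.smooth_a).add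
      (contDiffOn_twistDens S.smooth_η S.smooth_a)).of_le (by norm_cast) |>.mono
      fun p hp => ⟨hp.1.1.ne', (hp.1.2 p.2).ne'⟩)
    (fun x => (contDiff_energyFlux S.smooth_U S.smooth_A S.smooth_a x).of_le (by norm_cast))
    (energyFlux_periodic S.periodic_U S.periodic_A S.periodic_a) two_pi_pos.le
    (S.Icc_subset_setOf_pos_forall_a_pos hR₀ hr) hr.1
    fun x hx => S.pd1_EnKdens_le ⟨hx.1.le, hx.2.trans hr.2⟩ (hR₀.trans hx.1)

lemma a_le (hR₀ : 0 < R₀) (hr : r ∈ Ico R₀ Rs) (θ : ℝ) : S.a r θ ≤ S.a R₀ θ := by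
  refine antitoneOn_of_hasDerivWithinAt_nonpos (convex_Icc R₀ r)
    (fun s _ => (hasDerivAt_pd1 S.smooth_a s θ).continuousAt.continuousWithinAt)
    (fun s _ => (hasDerivAt_pd1 S.smooth_a s θ).hasDerivWithinAt) (fun s hs => ?_)
    (left_mem_Icc.2 hr.1) (right_mem_Icc.2 hr.1) hr.1
  rw [interior_Icc] at hs
  have hsD : s ∈ Ico R₀ Rs := ⟨hs.1.le, hs.2.trans hr.2⟩
  have := S.apos s hsD θ
  have := hR₀.trans hs.1
  rw [S.pd1_a_eq hsD, neg_div, neg_mul, neg_nonpos]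
  positivity

lemma a_le_iSup (hR₀ : 0 < R₀) (hr : r ∈ Ico R₀ Rs) (θ : ℝ) : S.a r θ ≤ ⨆ θ', S.a R₀ θ' :=
  (S.a_le hR₀ hr θ).trans <| le_ciSup ((show Periodic (S.a R₀) (2 * π) from S.periodic_a R₀)
    |>.compact_of_continuous two_pi_pos.ne' (S.smooth_a.of_uncurry R₀).continuous |>.bddAbove) θ

lemma integral_abs_pd1_η_mul_inv_a_le (hR₀ : 0 < R₀) (hr : r ∈ Ico R₀ Rs) :
    ∫ θ in (0 : ℝ)..(2 * π), |pd1 S.η r θ| * (S.a r θ)⁻¹ ≤ r * EnK K S.U S.A S.η S.a R₀ := by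
  have hr0 : 0 < r := hR₀.trans_le hr.1
  have hcont : Continuous fun θ => |pd1 S.η r θ| * (S.a r θ)⁻¹ := by
    have := (contDiff_pd1 S.smooth_η).continuous
    have := S.smooth_a.continuous
    fun_prop (disch := exact fun θ => (S.apos r hr θ).ne')
  calc ∫ θ in (0 : ℝ)..(2 * π), |pd1 S.η r θ| * (S.a r θ)⁻¹
      ≤ ∫ θ in (0 : ℝ)..(2 * π), r * (Edens S.U S.A S.a r θ + twistDens K S.η S.a r θ) :=
        intervalIntegral.integral_mono_on two_pi_pos.le (hcont.intervalIntegrable _ _)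
          ((continuous_const.mul (S.continuous_EnKdens hr hr0.ne')).intervalIntegrable _ _)
          fun θ _ => by
            rw [← div_eq_mul_inv, div_le_iff₀ (S.apos r hr θ)]
            exact S.abs_pd1_η_le hr hr0 θ
    _ = r * EnK K S.U S.A S.η S.a r := intervalIntegral.integral_const_mul _ _
    _ ≤ r * EnK K S.U S.A S.η S.a R₀ := mul_le_mul_of_nonneg_left (S.EnK_le hR₀ hr) hr0.le

lemma integral_abs_pd2_η_le (hR₀ : 0 < R₀) (hr : r ∈ Ico R₀ Rs) :
    ∫ θ in (0 : ℝ)..(2 * π), |pd2 S.η r θ| ≤ r * En S.U S.A S.a R₀ := by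
  have hr0 : 0 < r := hR₀.trans_le hr.1
  have hcont : Continuous fun θ => |pd2 S.η r θ| := by
    have := (contDiff_pd2 S.smooth_η).continuous
    fun_prop
  calc ∫ θ in (0 : ℝ)..(2 * π), |pd2 S.η r θ|
      ≤ ∫ θ in (0 : ℝ)..(2 * π), r * Edens S.U S.A S.a r θ :=
        intervalIntegral.integral_mono_on two_pi_pos.le (hcont.intervalIntegrable _ _)
          ((continuous_const.mul (S.continuous_Edens hr hr0.ne')).intervalIntegrable _ _)
          fun θ _ => S.abs_pd2_η_le hr hr0 θ
    _ = r * En S.U S.A S.a r := intervalIntegral.integral_const_mul _ _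
    _ ≤ r * En S.U S.A S.a R₀ := mul_le_mul_of_nonneg_left (S.En_le hR₀ hr) hr0.le

lemma abs_integral_pd1_η_le (hR₀ : 0 < R₀) (hr : r ∈ Ico R₀ Rs) :
    |∫ θ in (0 : ℝ)..(2 * π), pd1 S.η r θ|
      ≤ (⨆ θ, S.a R₀ θ) * r * EnK K S.U S.A S.η S.a R₀ := by
  have hr0 : 0 < r := hR₀.trans_le hr.1
  have hsup : 0 ≤ (⨆ θ, S.a R₀ θ) * r :=
    mul_nonneg ((S.apos r hr 0).le.trans (S.a_le_iSup hR₀ hr 0)) hr0.le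
  have hcont : Continuous fun θ => |pd1 S.η r θ| := by
    have := (contDiff_pd1 S.smooth_η).continuous
    fun_prop
  have hpt (θ : ℝ) : |pd1 S.η r θ|
      ≤ (⨆ θ, S.a R₀ θ) * r * (Edens S.U S.A S.a r θ + twistDens K S.η S.a r θ) := by
    have := add_nonneg (Edens_nonneg (U := S.U) (A := S.A) (S.apos r hr θ))
      (twistDens_nonneg (K := K) (η := S.η) (S.apos r hr θ))
    calc |pd1 S.η r θ|
        ≤ r * (Edens S.U S.A S.a r θ + twistDens K S.η S.a r θ) * S.a r θ := S.abs_pd1_η_le hr hr0 θ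
      _ ≤ r * (Edens S.U S.A S.a r θ + twistDens K S.η S.a r θ) * ⨆ θ, S.a R₀ θ := by
          gcongr; exact S.a_le_iSup hR₀ hr θ
      _ = _ := by ring
  calc |∫ θ in (0 : ℝ)..(2 * π), pd1 S.η r θ|
      ≤ ∫ θ in (0 : ℝ)..(2 * π), |pd1 S.η r θ| :=
        intervalIntegral.abs_integral_le_integral_abs two_pi_pos.le
    _ ≤ ∫ θ in (0 : ℝ)..(2 * π),
          (⨆ θ, S.a R₀ θ) * r * (Edens S.U S.A S.a r θ + twistDens K S.η S.a r θ) :=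
        intervalIntegral.integral_mono_on two_pi_pos.le (hcont.intervalIntegrable _ _)
          ((continuous_const.mul (S.continuous_EnKdens hr hr0.ne')).intervalIntegrable _ _)
          fun θ _ => hpt θ
    _ = (⨆ θ, S.a R₀ θ) * r * EnK K S.U S.A S.η S.a r := intervalIntegral.integral_const_mul _ _
    _ ≤ (⨆ θ, S.a R₀ θ) * r * EnK K S.U S.A S.η S.a R₀ :=
        mul_le_mul_of_nonneg_left (S.EnK_le hR₀ hr) hsup

lemma abs_integral_η_le (hR₀ : 0 < R₀) (hr : r ∈ Ico R₀ Rs) :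
    |∫ θ in (0 : ℝ)..(2 * π), S.η r θ| ≤ |∫ θ in (0 : ℝ)..(2 * π), S.η R₀ θ|
      + (⨆ θ, S.a R₀ θ) * ((r ^ 2 - R₀ ^ 2) / 2) * EnK K S.U S.A S.η S.a R₀ := by
  set m : ℝ → ℝ := fun y => ∫ θ in (0 : ℝ)..(2 * π), S.η y θ
  set C := ⨆ θ, S.a R₀ θ
  set E₀ := EnK K S.U S.A S.η S.a R₀
  have hm (y : ℝ) : HasDerivAt m (∫ θ in (0 : ℝ)..(2 * π), pd1 S.η y θ) y :=
    hasDerivAt_intervalIntegral_of_contDiffOn isOpen_univ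
      (S.smooth_η.of_le (by norm_cast)).contDiffOn (mem_univ y) _ _
  have hB (y : ℝ) :
      HasDerivAt (fun y => |m R₀| + C * ((y ^ 2 - R₀ ^ 2) / 2) * E₀) (C * y * E₀) y := by
    refine (((((hasDerivAt_pow 2 y).sub_const (R₀ ^ 2)).div_const 2).const_mul C).mul_const
      E₀).const_add |m R₀| |>.congr_deriv ?_
    norm_num
  simpa only [Real.norm_eq_abs] using image_norm_le_of_norm_deriv_right_le_deriv_boundary
    (fun y _ => (hm y).continuousAt.continuousWithinAt) (fun y _ => (hm y).hasDerivWithinAt)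
    (by simp) hB (fun y hy => S.abs_integral_pd1_η_le hR₀ ⟨hy.1, hy.2.trans hr.2⟩)
    (right_mem_Icc.2 hr.1)

end

end ArealSol

theorem areal_eta_estimates_general
    (R₀ Rs K : ℝ) (hR₀ : 0 < R₀)
    (S : ArealSol (Set.Ico R₀ Rs) K) :
    ∀ r ∈ Set.Ico R₀ Rs,
      ((1 / r) * (∫ θ in (0:ℝ)..(2 * Real.pi), |pd1 S.η r θ| * (S.a r θ)⁻¹)
          ≤ EnK K S.U S.A S.η S.a R₀) ∧
      ((1 / r) * (∫ θ in (0:ℝ)..(2 * Real.pi), |pd2 S.η r θ|)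
          ≤ En S.U S.A S.a R₀) ∧
      (∀ θ : ℝ,
        |S.η r θ| ≤ r * En S.U S.A S.a R₀
          + |∫ θ' in (0:ℝ)..(2 * Real.pi), S.η R₀ θ'|
          + (⨆ θ' : ℝ, S.a R₀ θ') * ((r ^ 2 - R₀ ^ 2) / 2)
              * EnK K S.U S.A S.η S.a R₀) := by
  intro r hr
  have hr0 : 0 < r := hR₀.trans_le hr.1
  refine ⟨?_, ?_, fun θ => ?_⟩
  · rw [one_div, inv_mul_le_iff₀ hr0]
    exact S.integral_abs_pd1_η_mul_inv_a_le hR₀ hr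
  · rw [one_div, inv_mul_le_iff₀ hr0]
    exact S.integral_abs_pd2_η_le hR₀ hr
  · have hη : ContDiff ℝ 1 (S.η r) := (S.smooth_η.of_uncurry r).of_le (by norm_cast)
    calc |S.η r θ|
        ≤ (∫ θ in (0 : ℝ)..(2 * π), |pd2 S.η r θ|)
            + |∫ θ in (0 : ℝ)..(2 * π), S.η r θ| / (2 * π) :=
          (show Periodic (S.η r) (2 * π) from S.periodic_η r).abs_le_integral_abs_deriv_add
            two_pi_pos hη θ
      _ ≤ r * En S.U S.A S.a R₀ + |∫ θ in (0 : ℝ)..(2 * π), S.η r θ| :=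
          add_le_add (S.integral_abs_pd2_η_le hR₀ hr)
            (div_le_self (abs_nonneg _) (by linarith [pi_gt_three]))
      _ ≤ _ := by linarith [S.abs_integral_η_le hR₀ hr]

/-- **Estimates for the metric coefficient `η`.**
For a smooth areal solution on `[R₀,R*)`:
(i) `(1/R) ∫ |η_R| a⁻¹ dθ ≤ 𝓔_K(R₀)`; (ii) `(1/R) ∫ |η_θ| dθ ≤ 𝓔(R₀)`; and
(iii) `|η(R,θ)| ≤ R 𝓔(R₀) + |∫ η(R₀,·)| + (sup a(R₀,·))((R² − R₀²)/2) 𝓔_K(R₀)`. -/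
theorem areal_eta_estimates
    (R₀ Rs K : ℝ) (hR₀ : 0 < R₀) (hRs : R₀ < Rs)
    (S : ArealSol (Set.Ico R₀ Rs) K) :
    ∀ r ∈ Set.Ico R₀ Rs,
      ((1 / r) * (∫ θ in (0:ℝ)..(2 * Real.pi), |pd1 S.η r θ| * (S.a r θ)⁻¹)
          ≤ EnK K S.U S.A S.η S.a R₀) ∧
      ((1 / r) * (∫ θ in (0:ℝ)..(2 * Real.pi), |pd2 S.η r θ|)
          ≤ En S.U S.A S.a R₀) ∧
      (∀ θ : ℝ,
        |S.η r θ| ≤ r * En S.U S.A S.a R₀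
          + |∫ θ' in (0:ℝ)..(2 * Real.pi), S.η R₀ θ'|
          + (⨆ θ' : ℝ, S.a R₀ θ') * ((r ^ 2 - R₀ ^ 2) / 2)
              * EnK K S.U S.A S.η S.a R₀) :=
  areal_eta_estimates_general R₀ Rs K hR₀ S
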